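/- arXiv:math/0508624 — 6 statements merged into one kernel-verified Lean document; each statement's English description precedes it below -/
import Mathlib

section
/- Let γ be a simple path in an open set U ⊆ ℝ² with γ(0) = a, γ(1) = b, and suppose the diameter of the image of γ is less than ε. Then for every positive integer n there exists a simple polygonal path in U from a to b of diameter less than (1 + 1/2^{n-1})·ε. -/
/-!
Sample `γ` so finely (uniform continuity) that consecutive sample points are closer than the
distance from the compact image `K` of `γ` to the complement of the open set
`U ∩ thickening r K`; the polygonal chain through the samples then lies in that set. A chain with
fewest segments among all such chains is simple: at a self-intersection one can cut out the loop,
erase a degenerate segment, or shortcut two adjacent segments that fold back onto each other.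
Since `r` is arbitrary, the diameter of the chain is as close to that of `K` as we like.
-/

/-- A polygonal path on `[0,1]`: piecewise linear with finitely many segments
(at uniformly spaced breakpoints `i/n`). -/
def IsPolygonalPath (γ : ℝ → ℂ) : Prop :=
  ∃ n : ℕ, 0 < n ∧ ∀ i : ℕ, i < n → ∀ t ∈ Set.Icc ((i : ℝ) / n) ((i + 1 : ℝ) / n),
    γ t = γ ((i : ℝ) / n) + ((n : ℝ) * t - (i : ℝ)) • (γ ((i + 1 : ℝ) / n) - γ ((i : ℝ) / n))

open Set AffineMap

section Polyline

variable {E : Type*} [AddCommGroup E] [Module ℝ E]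

theorem segment_subset_or_of_mem_segment_of_mem_segment {x y w z : E}
    (hy : x ∈ segment ℝ z y) (hw : x ∈ segment ℝ z w) (hxz : x ≠ z) :
    segment ℝ y w ⊆ segment ℝ z w ∨ segment ℝ y w ⊆ segment ℝ z y := by
  rw [mem_segment_iff_wbtw] at hy hw
  have hray : SameRay ℝ (y -ᵥ z) (w -ᵥ z) :=
    hy.sameRay_vsub_left.symm.trans hw.sameRay_vsub_left fun h =>
      absurd (vsub_eq_zero_iff_eq.1 h) hxz
  rcases wbtw_total_of_sameRay_vsub_left hray with h | h
  · exact .inl <| (convex_segment z w).segment_subset (mem_segment_iff_wbtw.2 h)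
      (right_mem_segment ℝ z w)
  · rw [segment_symm]
    exact .inr <| (convex_segment z y).segment_subset (mem_segment_iff_wbtw.2 h)
      (right_mem_segment ℝ z y)

noncomputable def polyline (p : ℕ → E) (t : ℝ) : E :=
  lineMap (p ⌊t⌋₊) (p (⌊t⌋₊ + 1)) (t - ⌊t⌋₊)

variable {p : ℕ → E}

@[simp]
theorem polyline_natCast (p : ℕ → E) (k : ℕ) : polyline p k = p k := by
  simp [polyline]

theorem polyline_eq_lineMap {i : ℕ} {t : ℝ} (hi : (i : ℝ) ≤ t) (ht : t ≤ i + 1) :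
    polyline p t = lineMap (p i) (p (i + 1)) (t - i) := by
  rcases ht.lt_or_eq with ht | rfl
  · rw [polyline, (Nat.floor_eq_iff ((Nat.cast_nonneg i).trans hi)).2 ⟨hi, ht⟩]
  · simpa using polyline_natCast p (i + 1)

theorem polyline_mem_segment {i : ℕ} {t : ℝ} (hi : (i : ℝ) ≤ t) (ht : t ≤ i + 1) :
    polyline p t ∈ segment ℝ (p i) (p (i + 1)) := by
  rw [polyline_eq_lineMap hi ht]
  exact lineMap_mem_segment ℝ _ _ ⟨by linarith, by linarith⟩

theorem injOn_polyline_Icc {i : ℕ} (hp : p i ≠ p (i + 1)) :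
    InjOn (polyline p) (Icc (i : ℝ) (i + 1)) := by
  intro s hs t ht hst
  rw [polyline_eq_lineMap hs.1 hs.2, polyline_eq_lineMap ht.1 ht.2] at hst
  simpa using lineMap_injective ℝ hp hst

theorem exists_nat_le_le_add_one_of_mem_Icc {n : ℕ} (hn : n ≠ 0) {t : ℝ}
    (ht : t ∈ Icc (0 : ℝ) n) : ∃ i < n, (i : ℝ) ≤ t ∧ t ≤ i + 1 := by
  rcases ht.2.lt_or_eq with htn | rfl
  · refine ⟨⌊t⌋₊, ?_, Nat.floor_le ht.1, (Nat.lt_floor_add_one t).le⟩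
    exact (Nat.floor_lt ht.1).2 htn
  · exact ⟨n - 1, by omega, by rw [Nat.cast_pred (by omega)]; linarith, by
      rw [Nat.cast_pred (by omega)]; linarith⟩

structure IsPolygonalChain (S : Set E) (a b : E) (n : ℕ) (p : ℕ → E) : Prop where
  zero : p 0 = a
  last : p n = b
  segment_subset : ∀ k < n, segment ℝ (p k) (p (k + 1)) ⊆ S

namespace IsPolygonalChain

variable {S : Set E} {a b : E} {n : ℕ}

theorem polyline_mem (hc : IsPolygonalChain S a b n p) (hn : n ≠ 0) {t : ℝ}
    (ht : t ∈ Icc (0 : ℝ) n) : polyline p t ∈ S := by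
  obtain ⟨i, hi, hit, hti⟩ := exists_nat_le_le_add_one_of_mem_Icc hn ht
  exact hc.segment_subset i hi (polyline_mem_segment hit hti)

theorem eraseVertex (hc : IsPolygonalChain S a b n p) {i : ℕ} (hi : i + 1 < n)
    (hshort : segment ℝ (p i) (p (i + 2)) ⊆ S) :
    IsPolygonalChain S a b (n - 1) fun k => if k ≤ i then p k else p (k + 1) where
  zero := by simpa using hc.zero
  last := by simpa [show ¬n - 1 ≤ i by omega, show n - 1 + 1 = n by omega] using hc.last
  segment_subset k hk := by
    by_cases hki : k < i
    · simpa [hki.le, show k + 1 ≤ i from hki] using hc.segment_subset k (by omega)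
    by_cases hk : k = i
    · simpa [hk] using hshort
    · simpa [show ¬k ≤ i by omega, show ¬k < i by omega] using
        hc.segment_subset (k + 1) (by omega)

/-- The chain with vertices `p 0, …, p i, x, p (j + 1), …, p n`. -/
theorem cut (hc : IsPolygonalChain S a b n p) {i j : ℕ} (hij : i ≤ j) (hj : j < n) {x : E}
    (hix : segment ℝ (p i) x ⊆ S) (hxj : segment ℝ x (p (j + 1)) ⊆ S) :
    IsPolygonalChain S a b (n + i + 1 - j)
      fun k => if k ≤ i then p k else if k = i + 1 then x else p (k + j - (i + 1)) where
  zero := by simpa using hc.zero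
  last := by
    simpa [show ¬n + i + 1 - j ≤ i by omega, show n + i + 1 - j ≠ i + 1 by omega,
      show n + i + 1 - j + j - (i + 1) = n by omega] using hc.last
  segment_subset k hk := by
    rcases lt_trichotomy k i with hki | rfl | hki
    · simpa [hki.le, show k + 1 ≤ i from hki] using hc.segment_subset k (by omega)
    · simpa using hix
    by_cases hk : k = i + 1
    · simpa [hk, show i + 1 + 1 + j - (i + 1) = j + 1 by omega] using hxj
    · simpa [show ¬k ≤ i by omega, hk, show ¬k + 1 ≤ i by omega, show k ≠ i by omega,
        show k + 1 + j - (i + 1) = k + j - (i + 1) + 1 by omega] using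
        hc.segment_subset (k + j - (i + 1)) (by omega)

theorem exists_shorter_of_eq (hc : IsPolygonalChain S a b n p) {i : ℕ} (hi : i < n)
    (hp : p i = p (i + 1)) : ∃ m < n, ∃ q, IsPolygonalChain S a b m q := by
  rcases (show i + 1 ≤ n from hi).lt_or_eq with hi | hi
  · exact ⟨n - 1, by omega, _, hc.eraseVertex hi (by simpa [hp] using hc.segment_subset _ hi)⟩
  · refine ⟨i, by omega, p, hc.zero, ?_, fun k hk => hc.segment_subset k (by omega)⟩
    rw [hp, hi, hc.last]

theorem exists_shorter_of_adjacent (hc : IsPolygonalChain S a b n p) {i : ℕ} (hi : i + 1 < n)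
    (hpi : p i ≠ p (i + 1)) (hpi' : p (i + 1) ≠ p (i + 2)) {s t : ℝ}
    (hs : s ∈ Icc (i : ℝ) (i + 1)) (ht : t ∈ Icc ((i : ℝ) + 1) (i + 2)) (hst : s < t)
    (heq : polyline p s = polyline p t) : ∃ m < n, ∃ q, IsPolygonalChain S a b m q := by
  have hvertex : polyline p (i + 1) = p (i + 1) := by exact_mod_cast polyline_natCast p (i + 1)
  have ht' : t ∈ Icc ((i + 1 : ℕ) : ℝ) ((i + 1 : ℕ) + 1) := by
    push_cast; exact ⟨ht.1, by linarith [ht.2]⟩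
  have hne : polyline p s ≠ p (i + 1) := by
    intro h
    have hs1 : s = i + 1 :=
      injOn_polyline_Icc hpi hs (right_mem_Icc.2 (by linarith)) (h.trans hvertex.symm)
    have ht1 : t = i + 1 :=
      injOn_polyline_Icc hpi' ht' (by push_cast; exact ⟨le_rfl, by linarith⟩)
        (heq ▸ h.trans (by exact_mod_cast hvertex.symm))
    linarith
  have hx : polyline p s ∈ segment ℝ (p (i + 1)) (p i) :=
    segment_symm ℝ (p i) _ ▸ polyline_mem_segment hs.1 hs.2
  have hx' : polyline p s ∈ segment ℝ (p (i + 1)) (p (i + 2)) :=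
    heq ▸ polyline_mem_segment ht'.1 ht'.2
  refine ⟨n - 1, by omega, _, hc.eraseVertex hi ?_⟩
  rcases segment_subset_or_of_mem_segment_of_mem_segment hx hx' hne with h | h
  · exact h.trans (hc.segment_subset _ hi)
  · exact h.trans (segment_symm ℝ (p i) _ ▸ hc.segment_subset _ (by omega))

theorem exists_shorter_of_polyline_eq (hc : IsPolygonalChain S a b n p) {s t : ℝ}
    (hs : s ∈ Icc (0 : ℝ) n) (ht : t ∈ Icc (0 : ℝ) n) (hst : s < t)
    (heq : polyline p s = polyline p t) : ∃ m < n, ∃ q, IsPolygonalChain S a b m q := by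
  have hn : n ≠ 0 := by
    rintro rfl
    simp only [Nat.cast_zero, Icc_self, mem_singleton_iff] at hs ht
    linarith
  obtain ⟨i, hi, his, hsi⟩ := exists_nat_le_le_add_one_of_mem_Icc hn hs
  obtain ⟨j, hj, hjt, htj⟩ := exists_nat_le_le_add_one_of_mem_Icc hn ht
  have hij : i ≤ j := Nat.lt_succ_iff.1 <| by exact_mod_cast his.trans_lt (hst.trans_le htj)
  by_cases hpi : p i = p (i + 1)
  · exact hc.exists_shorter_of_eq hi hpi
  by_cases hpj : p j = p (j + 1)
  · exact hc.exists_shorter_of_eq hj hpj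
  rcases hij.lt_or_eq with hij | rfl
  swap
  · exact absurd (injOn_polyline_Icc hpi ⟨his, hsi⟩ ⟨hjt, htj⟩ heq) hst.ne
  rcases (show i + 1 ≤ j from hij).lt_or_eq with hij | rfl
  · have hx := polyline_mem_segment (p := p) his hsi
    have hx' := heq ▸ polyline_mem_segment (p := p) hjt htj
    refine ⟨n + i + 1 - j, by omega, _, hc.cut (x := polyline p s) (by omega) hj ?_ ?_⟩
    · exact ((convex_segment _ _).segment_subset (left_mem_segment ..) hx).trans
        (hc.segment_subset i hi)
    · exact ((convex_segment _ _).segment_subset hx' (right_mem_segment ..)).trans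
        (hc.segment_subset j hj)
  · push_cast at hjt htj
    exact hc.exists_shorter_of_adjacent hj hpi hpj ⟨his, hsi⟩ ⟨hjt, by linarith⟩ hst heq

theorem exists_injOn_polyline (hc : IsPolygonalChain S a b n p) :
    ∃ m q, IsPolygonalChain S a b m q ∧ InjOn (polyline q) (Icc (0 : ℝ) m) := by
  induction n using Nat.strong_induction_on generalizing p with
  | _ n ih =>
    by_cases hinj : InjOn (polyline p) (Icc (0 : ℝ) n)
    · exact ⟨n, p, hc, hinj⟩
    simp only [InjOn, not_forall] at hinj
    obtain ⟨s, hs, t, ht, heq, hne⟩ := hinj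
    obtain ⟨m, hm, q, hq⟩ := (Ne.lt_or_gt hne).elim
      (hc.exists_shorter_of_polyline_eq hs ht · heq)
      (hc.exists_shorter_of_polyline_eq ht hs · heq.symm)
    exact ih m hm hq

end IsPolygonalChain

end Polyline

theorem exists_isPolygonalChain_of_continuousOn {E : Type*} [SeminormedAddCommGroup E]
    [NormedSpace ℝ E] {U : Set E} (hU : IsOpen U) {γ : ℝ → E} (hγ : ContinuousOn γ (Icc 0 1))
    (hγU : γ '' Icc 0 1 ⊆ U) : ∃ n p, IsPolygonalChain U (γ 0) (γ 1) n p := by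
  obtain ⟨δ, hδ, hδU⟩ :=
    (isCompact_Icc.image_of_continuousOn hγ).exists_thickening_subset_open hU hγU
  obtain ⟨η, hη, hγη⟩ := Metric.uniformContinuousOn_iff.1
    (isCompact_Icc.uniformContinuousOn_of_continuous hγ) δ hδ
  obtain ⟨m, hm⟩ := exists_nat_one_div_lt hη
  have hmem (k : ℕ) (hk : k ≤ m + 1) : (k : ℝ) / (m + 1) ∈ Icc (0 : ℝ) 1 :=
    ⟨by positivity, div_le_one_of_le₀ (by exact_mod_cast hk) (by positivity)⟩
  refine ⟨m + 1, fun k => γ (k / (m + 1)), by simp, by simp [(Nat.cast_add_one_pos m).ne'],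
    fun k hk => ?_⟩
  have hclose : dist (γ (k / (m + 1))) (γ ((k + 1 : ℕ) / (m + 1))) < δ := by
    refine hγη _ (hmem k hk.le) _ (hmem (k + 1) hk) ?_
    rw [Real.dist_eq, abs_sub_comm, Nat.cast_succ, ← sub_div, add_sub_cancel_left,
      abs_of_pos (by positivity)]
    exact hm
  refine ((convex_ball _ δ).segment_subset (Metric.mem_ball_self hδ)
    (Metric.mem_ball.2 (by rwa [dist_comm]))).trans ?_
  exact (Metric.ball_subset_thickening (mem_image_of_mem γ (hmem k hk.le)) δ).trans hδU

theorem isPolygonalPath_polyline_comp_mul {n : ℕ} (hn : 0 < n) (p : ℕ → ℂ) :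
    IsPolygonalPath fun t => polyline p (n * t) := by
  have hn' : (0 : ℝ) < n := by exact_mod_cast hn
  refine ⟨n, hn, fun i _ t ht => ?_⟩
  have h1 : (i : ℝ) ≤ n * t := by rw [mul_comm]; exact (div_le_iff₀ hn').1 ht.1
  have h2 : n * t ≤ i + 1 := by rw [mul_comm]; exact (le_div_iff₀ hn').1 ht.2
  have hvertex : polyline p (i + 1) = p (i + 1) := by exact_mod_cast polyline_natCast p (i + 1)
  simp only [mul_div_cancel₀ _ hn'.ne', polyline_natCast, hvertex, polyline_eq_lineMap h1 h2,
    lineMap_apply_module']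
  exact add_comm _ _

theorem exists_injOn_isPolygonalPath {U : Set ℂ} (hU : IsOpen U) {γ : ℝ → ℂ}
    (hγ : ContinuousOn γ (Icc 0 1)) (hγU : γ '' Icc 0 1 ⊆ U) (hγ01 : γ 0 ≠ γ 1) :
    ∃ σ : ℝ → ℂ, IsPolygonalPath σ ∧ InjOn σ (Icc 0 1) ∧ σ '' Icc 0 1 ⊆ U ∧
      σ 0 = γ 0 ∧ σ 1 = γ 1 := by
  obtain ⟨n, p, hp⟩ := exists_isPolygonalChain_of_continuousOn hU hγ hγU
  obtain ⟨m, q, hq, hinj⟩ := hp.exists_injOn_polyline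
  have hm : m ≠ 0 := by rintro rfl; exact hγ01 (hq.zero.symm.trans hq.last)
  have hm' : (0 : ℝ) < m := by positivity
  have hmaps : MapsTo (fun t : ℝ => m * t) (Icc 0 1) (Icc 0 m) := fun t ht =>
    ⟨by nlinarith [ht.1], by nlinarith [ht.2]⟩
  refine ⟨fun t => polyline q (m * t), isPolygonalPath_polyline_comp_mul (by omega) q,
    hinj.comp (mul_right_injective₀ hm'.ne').injOn hmaps, ?_,
    by simpa using (polyline_natCast q 0).trans hq.zero, by simpa using hq.last⟩
  rintro _ ⟨t, ht, rfl⟩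
  exact hq.polyline_mem hm (hmaps ht)

/-- A simple path of diameter `< ε` in an open set `U` from `a` to `b`
can be replaced, for each positive integer `n`, by a simple polygonal path in `U`
from `a` to `b` of diameter `< (1 + 1/2^(n-1)) * ε`. -/
theorem simple_polygonal_of_simple_path (U : Set ℂ) (hU : IsOpen U)
    (γ : ℝ → ℂ) (a b : ℂ) (ε : ℝ)
    (hγc : ContinuousOn γ (Set.Icc 0 1)) (hγi : Set.InjOn γ (Set.Icc 0 1))
    (hγU : γ '' Set.Icc 0 1 ⊆ U) (h0 : γ 0 = a) (h1 : γ 1 = b)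
    (hdiam : Metric.diam (γ '' Set.Icc 0 1) < ε) :
    ∀ n : ℕ, 0 < n →
      ∃ σ : ℝ → ℂ, IsPolygonalPath σ ∧ Set.InjOn σ (Set.Icc 0 1) ∧
        σ '' Set.Icc 0 1 ⊆ U ∧ σ 0 = a ∧ σ 1 = b ∧
        Metric.diam (σ '' Set.Icc 0 1) < (1 + 1 / 2 ^ (n - 1)) * ε := by
  intro n _
  set K := γ '' Icc 0 1
  have hε : 0 < ε := Metric.diam_nonneg.trans_lt hdiam
  obtain ⟨r, hr, hrK⟩ : ∃ r > 0, Metric.diam K + 2 * r < ε :=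
    ⟨(ε - Metric.diam K) / 4, by linarith, by linarith⟩
  have h01 : γ 0 ≠ γ 1 := fun h => zero_ne_one <|
    hγi (left_mem_Icc.2 zero_le_one) (right_mem_Icc.2 zero_le_one) h
  obtain ⟨σ, hσ, hσi, hσU, hσ0, hσ1⟩ := exists_injOn_isPolygonalPath
    (hU.inter Metric.isOpen_thickening) hγc (subset_inter hγU (Metric.self_subset_thickening hr K))
    h01
  refine ⟨σ, hσ, hσi, hσU.trans inter_subset_left, hσ0.trans h0, hσ1.trans h1, ?_⟩
  calc Metric.diam (σ '' Icc 0 1)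
      ≤ Metric.diam (Metric.thickening r K) :=
        Metric.diam_mono (hσU.trans inter_subset_right)
          (isCompact_Icc.image_of_continuousOn hγc).isBounded.thickening
    _ ≤ Metric.diam K + 2 * r := Metric.diam_thickening_le K hr.le
    _ < ε := hrK
    _ ≤ (1 + 1 / 2 ^ (n - 1)) * ε := le_mul_of_one_le_left hε.le (by simp)
end

section
/- If U ⊆ ℝ² is an open connected set, F₁ = ℝ² \ U is closed with connected complement U, F₂ ⊂ U is a compact simple arc (so ℝ² \ F₂ is connected), and F₁ ∩ F₂ = ∅, then U \ F₂ = ℝ² \ (F₁ ∪ F₂) is connected. -/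
/-!
The plane is unicoherent: if two open connected sets cover it, their intersection is connected.
Apply this to `U` and `F₂ᶜ`. For unicoherence, suppose `A ∩ B = P ∪ Q` is a separation and take
a Urysohn function `w` that is `0` off `B` and `1` off `A`. The angles `2π w 1_Q` (continuous on
`A`) and `2π (w - 1) 1_Q` (continuous on `B`) define the same map to the circle, which is
therefore continuous on `A ∪ B`. As the plane is simply connected, it lifts to a global angle
`g`, and by connectedness `g` differs from each of the two angles by a constant on `A`, resp.
`B`. So the difference `2π 1_Q` of the two angles is constant on `A ∩ B`, which is absurd.
-/

open Set Real

variable {X : Type*} [TopologicalSpace X]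

theorem ContinuousMap.exists_circleExp_comp_eq [SimplyConnectedSpace X]
    [LocallyPathConnectedSpace X] (f : C(X, Circle)) : ∃ g : C(X, ℝ), Circle.exp ∘ g = f := by
  obtain ⟨x₀⟩ : Nonempty X := inferInstance
  obtain ⟨g, -, hg⟩ := (Circle.isCoveringMap_exp.existsUnique_continuousMap_lifts f x₀ _
    (Circle.exp_arg (f x₀))).exists
  exact ⟨g, hg⟩

theorem IsPreconnected.sub_eq_sub_of_circleExp_eqOn {s : Set X} (hs : IsPreconnected s)
    {g₁ g₂ : X → ℝ} (h₁ : ContinuousOn g₁ s) (h₂ : ContinuousOn g₂ s)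
    (h : EqOn (Circle.exp ∘ g₁) (Circle.exp ∘ g₂) s) {x y : X} (hx : x ∈ s) (hy : y ∈ s) :
    g₁ x - g₂ x = g₁ y - g₂ y := by
  refine hs.constant_of_mapsTo (T := AddSubgroup.zmultiples (2 * π))
    (isDiscrete_iff_discreteTopology.mpr
      (inferInstanceAs (DiscreteTopology (AddSubgroup.zmultiples (2 * π)))))
    (h₁.sub h₂) (fun z hz => ?_) hx hy
  obtain ⟨m, hm⟩ := Circle.exp_eq_exp.mp (h hz)
  exact AddSubgroup.mem_zmultiples_iff.mpr ⟨m, by simp [hm]⟩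

theorem frontier_subset_compl_union_of_isOpen {P Q : Set X} (hP : IsOpen P) (hQ : IsOpen Q)
    (hPQ : Disjoint P Q) : frontier Q ⊆ (P ∪ Q)ᶜ := by
  rw [hQ.frontier_eq, compl_union]
  exact fun x ⟨hxQ, hxQ'⟩ => ⟨(hPQ.symm.closure_left hP).notMem_of_mem_left hxQ, hxQ'⟩

theorem ContinuousOn.indicator_of_eq_zero_on_frontier {M : Type*} [TopologicalSpace M] [Zero M]
    {A Q : Set X} {f : X → M} (hf : ContinuousOn f A) (h : ∀ x ∈ A ∩ frontier Q, f x = 0) :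
    ContinuousOn (Q.indicator f) A := by
  classical
  rw [← piecewise_eq_indicator]
  exact ContinuousOn.piecewise h (hf.mono inter_subset_left) continuousOn_const

theorem IsPreconnected.inter_of_isOpen_of_union_eq_univ [NormalSpace X] [SimplyConnectedSpace X]
    [LocallyPathConnectedSpace X] {A B : Set X} (hAo : IsOpen A) (hBo : IsOpen B)
    (hA : IsPreconnected A) (hB : IsPreconnected B) (hAB : A ∪ B = univ) :
    IsPreconnected (A ∩ B) := by
  intro u v hu hv hsub ⟨p, hp, hpu⟩ ⟨q, hq, hqv⟩
  by_contra huv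
  set P := A ∩ B ∩ u
  set Q := A ∩ B ∩ v
  have hPQ : Disjoint P Q := disjoint_left.mpr fun x hxu hxv => huv ⟨x, hxu.1, hxu.2, hxv.2⟩
  have hfr : frontier Q ⊆ (A ∩ B)ᶜ := by
    have := frontier_subset_compl_union_of_isOpen ((hAo.inter hBo).inter hu)
      ((hAo.inter hBo).inter hv) hPQ
    rwa [← inter_union_distrib_left, inter_eq_left.mpr hsub] at this
  obtain ⟨w, hw0, hw1, -⟩ := exists_continuous_zero_one_of_isClosed hBo.isClosed_compl
    hAo.isClosed_compl (disjoint_compl_left_iff_subset.mpr (compl_subset_iff_union.mpr hAB))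
  set α := Q.indicator fun x => 2 * π * w x
  set β := Q.indicator fun x => 2 * π * (w x - 1)
  have hα : ContinuousOn α A := ContinuousOn.indicator_of_eq_zero_on_frontier
    (by fun_prop) fun x ⟨hxA, hx⟩ => by simp [hw0 fun hxB => hfr hx ⟨hxA, hxB⟩]
  have hβ : ContinuousOn β B := ContinuousOn.indicator_of_eq_zero_on_frontier
    (by fun_prop) fun x ⟨hxB, hx⟩ => by simp [hw1 fun hxA => hfr hx ⟨hxA, hxB⟩]
  have hαβ : Circle.exp ∘ α = Circle.exp ∘ β := funext fun x => by
    by_cases hx : x ∈ Q <;> simp [α, β, hx, mul_sub]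
  have hf : Continuous (Circle.exp ∘ α) := by
    rw [← continuousOn_univ, ← hAB]
    exact (Circle.exp.continuous.comp_continuousOn hα).union_of_isOpen
      (hαβ ▸ Circle.exp.continuous.comp_continuousOn hβ) hAo hBo
  obtain ⟨g, hg⟩ := ContinuousMap.exists_circleExp_comp_eq ⟨_, hf⟩
  have hgα := hA.sub_eq_sub_of_circleExp_eqOn g.continuous.continuousOn hα
    (fun x _ => congrFun hg x) hp.1 hq.1
  have hgβ := hB.sub_eq_sub_of_circleExp_eqOn g.continuous.continuousOn hβ
    (fun x _ => (congrFun hg x).trans (congrFun hαβ x)) hp.2 hq.2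
  have hpQ : p ∉ Q := fun hpQ => huv ⟨p, hp, hpu, hpQ.2⟩
  simp only [α, β, indicator_of_notMem hpQ, indicator_of_mem (show q ∈ Q from ⟨hq, hqv⟩),
    sub_zero] at hgα hgβ
  linarith [pi_pos]

theorem IsOpen.nonempty_diff_of_isCompact_subset [T2Space X] [PreconnectedSpace X]
    [NoncompactSpace X] {U K : Set X} (hU : IsOpen U) (hUne : U.Nonempty) (hK : IsCompact K)
    (hKU : K ⊆ U) : (U \ K).Nonempty := by
  by_contra! h
  have hUK : U = K := (sdiff_eq_empty.mp h).antisymm hKU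
  apply noncompact_univ X
  rwa [← IsClopen.eq_univ ⟨hUK ▸ hK.isClosed, hU⟩ hUne, hUK]

theorem complement_of_arc_in_open_connected_general (U : Set ℂ) (hU : IsOpen U)
    (hUconn : IsConnected U)
    (F₁ F₂ : Set ℂ) (hF₁ : F₁ = Uᶜ)
    (hF₂U : F₂ ⊆ U) (hF₂cpt : IsCompact F₂)
    (hF₂conn : IsConnected F₂ᶜ) :
    U \ F₂ = (F₁ ∪ F₂)ᶜ ∧ IsConnected (U \ F₂) := by
  refine ⟨by rw [hF₁, compl_union, compl_compl, sdiff_eq],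
    hU.nonempty_diff_of_isCompact_subset hUconn.nonempty hF₂cpt hF₂U, ?_⟩
  rw [sdiff_eq]
  exact hUconn.isPreconnected.inter_of_isOpen_of_union_eq_univ hU hF₂cpt.isClosed.isOpen_compl
    hF₂conn.isPreconnected (compl_subset_iff_union.mp (compl_subset_compl.mpr hF₂U))

/-- If `U ⊆ ℝ²` is open and connected, `F₁ = ℝ² \ U`,
`F₂ ⊂ U` is a compact simple arc (whose complement in the plane is connected,
by the Jordan arc theorem), and `F₁ ∩ F₂ = ∅`, then
`U \ F₂ = ℝ² \ (F₁ ∪ F₂)` is connected. -/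
theorem complement_of_arc_in_open_connected (U : Set ℂ) (hU : IsOpen U)
    (hUconn : IsConnected U)
    (F₁ F₂ : Set ℂ) (hF₁ : F₁ = Uᶜ)
    (hF₂U : F₂ ⊆ U) (hF₂cpt : IsCompact F₂)
    (p : ℝ → ℂ) (hpc : ContinuousOn p (Set.Icc 0 1))
    (hpi : Set.InjOn p (Set.Icc 0 1)) (hparc : F₂ = p '' Set.Icc 0 1)
    (hF₂conn : IsConnected F₂ᶜ)
    (hdisj : F₁ ∩ F₂ = ∅) :
    U \ F₂ = (F₁ ∪ F₂)ᶜ ∧ IsConnected (U \ F₂) :=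
  complement_of_arc_in_open_connected_general U hU hUconn F₁ F₂ hF₁ hF₂U hF₂cpt hF₂conn
end

section
/- Let f : ℂ → ℂ be harmonic and suppose {zₙ} satisfies zₙ → ∞, wₙ = f(zₙ) → w₀, and J_f(zₙ) > 0 for all n. Assume: (1) d({zₙ}, S) = δ > 0 where S is the critical set; (2) infₙ J_f(zₙ) = η² > 0; (3) there exists ρ ∈ (0, δ) with sup over n and z ∈ B(zₙ, ρ) of J_f(z)/J_f(zₙ) finite; and (4) supₙ {|μ_f(z)| : z ∈ closure of B(zₙ, ρ)} < 1. Then the cluster set C(f, ∞) has non-empty interior and Val(f, w) = ∞ for all w in some neighborhood of w₀. -/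
open Filter

/-- The cluster set of `f` at infinity: finite values `w` for which there is a
sequence `zₙ → ∞` with `f(zₙ) → w`. -/
def clusterSetInf (f : ℂ → ℂ) : Set ℂ :=
  {w : ℂ | ∃ z : ℕ → ℂ, Tendsto (fun n => ‖z n‖) atTop atTop ∧
    Tendsto (fun n => f (z n)) atTop (nhds w)}

/-!
On each ball `B(zₙ, ρ)` the Jacobian has no zeros, hence stays positive, so `|g'| ≤ M |h'|` there;
together with `J ≤ M₁ J(zₙ)` this bounds `|h'|` and `|g'|` by `C |h'(zₙ)|`, `C² = M₁ / (1 - M²)`.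
By the Schwarz lemma the differential of `f = h + conj g` then moves by at most
`4 C |h'(zₙ)| r / ρ` on `B(zₙ, r)`, while at `zₙ` it expands lengths by at least
`|h'(zₙ)| - |g'(zₙ)| ≥ (1 - M) η`. For a fixed small `r` the quantitative inverse function theorem
(in place of the schlicht-disk theorem) gives one radius `R` with `B(f(zₙ), R) ⊆ f(B(zₙ, r))` for
all `n`. As `f(zₙ) → w₀` and `zₙ → ∞`, every `w ∈ B(w₀, R)` has an unbounded preimage, so it lies
in the cluster set and is taken infinitely often.
-/

open Metric Set Bornology ComplexConjugate
open scoped NNReal Topology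

noncomputable def jacobian (h g : ℂ → ℂ) (ζ : ℂ) : ℝ :=
  ‖deriv h ζ‖ ^ 2 - ‖deriv g ζ‖ ^ 2

noncomputable def dilatation (h g : ℂ → ℂ) (ζ : ℂ) : ℂ :=
  conj (deriv g ζ) / deriv h ζ

noncomputable def mulAddConjMulCLM (a b : ℂ) : ℂ →L[ℝ] ℂ :=
  a • (1 : ℂ →L[ℝ] ℂ) + Complex.conjCLE.toContinuousLinearMap.comp (b • (1 : ℂ →L[ℝ] ℂ))

@[simp]
lemma mulAddConjMulCLM_apply (a b v : ℂ) : mulAddConjMulCLM a b v = a * v + conj (b * v) := by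
  simp [mulAddConjMulCLM, Complex.conjCLE]

lemma mulAddConjMulCLM_sub (a b a' b' : ℂ) :
    mulAddConjMulCLM a b - mulAddConjMulCLM a' b' = mulAddConjMulCLM (a - a') (b - b') := by
  ext v
  simp only [sub_apply, mulAddConjMulCLM_apply, map_mul, map_sub]
  ring

lemma norm_mulAddConjMulCLM_le (a b : ℂ) : ‖mulAddConjMulCLM a b‖ ≤ ‖a‖ + ‖b‖ := by
  refine ContinuousLinearMap.opNorm_le_bound _ (by positivity) fun v => ?_
  calc ‖a * v + conj (b * v)‖ ≤ ‖a * v‖ + ‖conj (b * v)‖ := norm_add_le _ _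
    _ = (‖a‖ + ‖b‖) * ‖v‖ := by simp only [Complex.norm_conj, norm_mul]; ring

lemma antilipschitz_mulAddConjMulCLM {a b : ℂ} (hab : ‖b‖ < ‖a‖) :
    AntilipschitzWith (‖a‖₊ - ‖b‖₊)⁻¹ (mulAddConjMulCLM a b) := by
  refine ContinuousLinearMap.antilipschitz_of_bound _ fun v => ?_
  have hlower : (‖a‖ - ‖b‖) * ‖v‖ ≤ ‖a * v + conj (b * v)‖ :=
    calc (‖a‖ - ‖b‖) * ‖v‖ = ‖a * v‖ - ‖conj (b * v)‖ := by
          simp only [Complex.norm_conj, norm_mul]; ring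
      _ ≤ ‖a * v + conj (b * v)‖ := norm_sub_le_norm_add _ _
  rw [NNReal.coe_inv, NNReal.coe_sub (by exact_mod_cast hab.le), coe_nnnorm, coe_nnnorm,
    mulAddConjMulCLM_apply, inv_mul_eq_div, le_div_iff₀ (by linarith)]
  linarith

lemma HasDerivAt.hasFDerivAt_add_conj {h g : ℂ → ℂ} {a b z : ℂ} (hh : HasDerivAt h a z)
    (hg : HasDerivAt g b z) :
    HasFDerivAt (fun ζ => h ζ + conj (g ζ)) (mulAddConjMulCLM a b) z :=
  hh.complexToReal_fderiv.add
    (Complex.conjCLE.toContinuousLinearMap.hasFDerivAt.comp z hg.complexToReal_fderiv)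

section FiniteDimensional

variable {𝕜 E : Type*} [NontriviallyNormedField 𝕜] [NormedAddCommGroup E]
  [NormedSpace 𝕜 E] [FiniteDimensional 𝕜 E]

theorem AntilipschitzWith.surjective_continuousLinearMap {A : E →L[𝕜] E} {K : ℝ≥0}
    (hA : AntilipschitzWith K A) : Function.Surjective A :=
  (LinearMap.injective_iff_surjective (f := (A : E →ₗ[𝕜] E))).1 hA.injective

noncomputable def ContinuousLinearMap.nonlinearRightInverseOfAntilipschitz (A : E →L[𝕜] E)
    {K : ℝ≥0} (hA : AntilipschitzWith K A) : A.NonlinearRightInverse where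
  toFun := Function.surjInv hA.surjective_continuousLinearMap
  nnnorm := K
  bound' y := by
    have := A.bound_of_antilipschitz hA (Function.surjInv hA.surjective_continuousLinearMap y)
    rwa [Function.surjInv_eq hA.surjective_continuousLinearMap y] at this
  right_inv' := Function.surjInv_eq _

theorem ApproximatesLinearOn.surjOn_closedBall_of_antilipschitz [CompleteSpace 𝕜] {f : E → E}
    {A : E →L[𝕜] E} {s : Set E} {c K : ℝ≥0} (hf : ApproximatesLinearOn f A s c)
    (hA : AntilipschitzWith K A) {ε : ℝ} {b : E} (ε0 : 0 ≤ ε) (hε : closedBall b ε ⊆ s) :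
    SurjOn f (closedBall b ε) (closedBall (f b) (((K : ℝ)⁻¹ - c) * ε)) :=
  haveI := FiniteDimensional.complete 𝕜 E
  hf.surjOn_closedBall_of_nonlinearRightInverse (A.nonlinearRightInverseOfAntilipschitz hA) ε0 hε

end FiniteDimensional

theorem IsPreconnected.pos_of_pos_of_ne_zero {X : Type*} [TopologicalSpace X] {s : Set X}
    {F : X → ℝ} (hs : IsPreconnected s) (hF : ContinuousOn F s) (hne : ∀ x ∈ s, F x ≠ 0)
    {c x : X} (hc : c ∈ s) (hFc : 0 < F c) (hx : x ∈ s) : 0 < F x := by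
  by_contra! hle
  obtain ⟨y, hy, hFy⟩ := hs.intermediate_value hx hc hF ⟨hle, hFc.le⟩
  exact hne y hy hFy

theorem Complex.dist_le_two_mul_div_mul_dist_of_norm_le {E F : Type*} [NormedAddCommGroup E]
    [NormedSpace ℂ E] [NormedAddCommGroup F] [NormedSpace ℂ F] {φ : E → F} {c z : E} {ρ A : ℝ}
    (hφ : DifferentiableOn ℂ φ (ball c ρ)) (hA : ∀ ξ ∈ ball c ρ, ‖φ ξ‖ ≤ A)
    (hz : z ∈ ball c ρ) : dist (φ z) (φ c) ≤ 2 * A / ρ * dist z c := by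
  refine Complex.dist_le_div_mul_dist_of_mapsTo_ball hφ (fun ξ hξ => ?_) hz
  have hc : c ∈ ball c ρ := mem_ball_self (pos_of_mem_ball hz)
  exact mem_closedBall.2 ((dist_le_norm_add_norm _ _).trans (by linarith [hA ξ hξ, hA c hc]))

section AddConj

variable {h g : ℂ → ℂ} {c : ℂ} {ρ r A : ℝ}

theorem approximatesLinearOn_add_conj (hh : DifferentiableOn ℂ h (ball c ρ))
    (hg : DifferentiableOn ℂ g (ball c ρ)) (hAh : ∀ ζ ∈ ball c ρ, ‖deriv h ζ‖ ≤ A)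
    (hAg : ∀ ζ ∈ ball c ρ, ‖deriv g ζ‖ ≤ A) (hrρ : r < ρ) :
    ApproximatesLinearOn (fun ζ => h ζ + conj (g ζ)) (mulAddConjMulCLM (deriv h c) (deriv g c))
      (closedBall c r) (Real.toNNReal (4 * A * r / ρ)) := by
  intro x hx y hy
  have hr : 0 ≤ r := nonempty_closedBall.1 ⟨x, hx⟩
  have hsub : closedBall c r ⊆ ball c ρ := closedBall_subset_ball hrρ
  have hρ : 0 < ρ := hr.trans_lt hrρ
  have hA : 0 ≤ A := (norm_nonneg _).trans (hAh c (mem_ball_self hρ))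
  have hderiv : ∀ ξ ∈ closedBall c r, HasFDerivWithinAt (fun ζ => h ζ + conj (g ζ))
      (mulAddConjMulCLM (deriv h ξ) (deriv g ξ)) (closedBall c r) ξ := fun ξ hξ =>
    have hξ : ball c ρ ∈ 𝓝 ξ := isOpen_ball.mem_nhds (hsub hξ)
    ((hh.differentiableAt hξ).hasDerivAt.hasFDerivAt_add_conj
      (hg.differentiableAt hξ).hasDerivAt).hasFDerivWithinAt
  have hbound : ∀ ξ ∈ closedBall c r, ‖mulAddConjMulCLM (deriv h ξ) (deriv g ξ) -
      mulAddConjMulCLM (deriv h c) (deriv g c)‖ ≤ 4 * A * r / ρ := by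
    intro ξ hξ
    have hdist : dist ξ c ≤ r := hξ
    have lip : ∀ φ : ℂ → ℂ, DifferentiableOn ℂ φ (ball c ρ) →
        (∀ ζ ∈ ball c ρ, ‖deriv φ ζ‖ ≤ A) → ‖deriv φ ξ - deriv φ c‖ ≤ 2 * A / ρ * r := by
      intro φ hφ hAφ
      rw [← dist_eq_norm]
      exact (Complex.dist_le_two_mul_div_mul_dist_of_norm_le (hφ.deriv isOpen_ball) hAφ
        (hsub hξ)).trans (by gcongr)
    rw [mulAddConjMulCLM_sub]
    refine (norm_mulAddConjMulCLM_le _ _).trans ?_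
    have hsum : 2 * A / ρ * r + 2 * A / ρ * r = 4 * A * r / ρ := by ring
    linarith [lip h hh hAh, lip g hg hAg]
  rw [Real.coe_toNNReal _ (by positivity)]
  exact (convex_closedBall c r).norm_image_sub_le_of_norm_hasFDerivWithin_le' hderiv hbound hy hx

theorem surjOn_closedBall_add_conj (hh : DifferentiableOn ℂ h (ball c ρ))
    (hg : DifferentiableOn ℂ g (ball c ρ)) (hAh : ∀ ζ ∈ ball c ρ, ‖deriv h ζ‖ ≤ A)
    (hAg : ∀ ζ ∈ ball c ρ, ‖deriv g ζ‖ ≤ A) (hr : 0 ≤ r) (hrρ : r < ρ)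
    (hgh : ‖deriv g c‖ < ‖deriv h c‖) :
    SurjOn (fun ζ => h ζ + conj (g ζ)) (closedBall c r)
      (closedBall (h c + conj (g c)) ((‖deriv h c‖ - ‖deriv g c‖ - 4 * A * r / ρ) * r)) := by
  have hρ : 0 < ρ := hr.trans_lt hrρ
  have hA : 0 ≤ A := (norm_nonneg _).trans (hAh c (mem_ball_self hρ))
  have := (approximatesLinearOn_add_conj hh hg hAh hAg hrρ).surjOn_closedBall_of_antilipschitz
    (antilipschitz_mulAddConjMulCLM hgh) hr Subset.rfl
  rwa [Real.coe_toNNReal _ (by positivity), NNReal.coe_inv, inv_inv,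
    NNReal.coe_sub (by exact_mod_cast hgh.le), coe_nnnorm, coe_nnnorm] at this

end AddConj

lemma norm_le_mul_norm_of_norm_conj_div_le {a b : ℂ} {M : ℝ} (ha : a ≠ 0)
    (hμ : ‖conj b / a‖ ≤ M) : ‖b‖ ≤ M * ‖a‖ := by
  rwa [norm_div, Complex.norm_conj, div_le_iff₀ (norm_pos_iff.2 ha)] at hμ

lemma norm_le_sqrt_mul_norm_of_jacobian_div_le {a b a₀ b₀ : ℂ} {M M₁ : ℝ} (hM₀ : 0 ≤ M)
    (hM : M < 1) (hb : ‖b‖ ≤ M * ‖a‖) (hJ₀ : 0 < ‖a₀‖ ^ 2 - ‖b₀‖ ^ 2)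
    (hJ : (‖a‖ ^ 2 - ‖b‖ ^ 2) / (‖a₀‖ ^ 2 - ‖b₀‖ ^ 2) ≤ M₁) :
    ‖a‖ ≤ √(M₁ / (1 - M ^ 2)) * ‖a₀‖ := by
  rw [div_le_iff₀ hJ₀] at hJ
  have hM2 : 0 < 1 - M ^ 2 := by nlinarith
  have hbsq : ‖b‖ ^ 2 ≤ (M * ‖a‖) ^ 2 := pow_le_pow_left₀ (norm_nonneg b) hb 2
  have hlow : (1 - M ^ 2) * ‖a‖ ^ 2 ≤ M₁ * (‖a₀‖ ^ 2 - ‖b₀‖ ^ 2) := by nlinarith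
  have hM₁ : 0 ≤ M₁ := nonneg_of_mul_nonneg_left ((by positivity : (0 : ℝ) ≤ _).trans hlow) hJ₀
  have hJ₀le : M₁ * (‖a₀‖ ^ 2 - ‖b₀‖ ^ 2) ≤ M₁ * ‖a₀‖ ^ 2 :=
    mul_le_mul_of_nonneg_left (by nlinarith [norm_nonneg b₀]) hM₁
  rw [← Real.sqrt_sq (norm_nonneg a₀), ← Real.sqrt_mul' _ (sq_nonneg _),
    Real.le_sqrt (norm_nonneg a) (by positivity), div_mul_eq_mul_div, le_div_iff₀ hM2]
  linarith

lemma norm_deriv_le_mul_of_norm_dilatation_le {h g : ℂ → ℂ} {ζ : ℂ} {M : ℝ}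
    (hJ : 0 < jacobian h g ζ) (hμ : ‖dilatation h g ζ‖ ≤ M) :
    ‖deriv g ζ‖ ≤ M * ‖deriv h ζ‖ := by
  refine norm_le_mul_norm_of_norm_conj_div_le (fun h0 => ?_) hμ
  simp only [jacobian, h0, norm_zero] at hJ
  nlinarith

lemma jacobian_pos_of_ne_zero {h g : ℂ → ℂ} (hh : Differentiable ℂ h) (hg : Differentiable ℂ g)
    {c : ℂ} {ρ : ℝ} (hne : ∀ ζ ∈ ball c ρ, jacobian h g ζ ≠ 0) (hc : 0 < jacobian h g c)
    {ζ : ℂ} (hζ : ζ ∈ ball c ρ) : 0 < jacobian h g ζ :=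
  have hcont : Continuous (jacobian h g) :=
    (hh.deriv.continuous.norm.pow 2).sub (hg.deriv.continuous.norm.pow 2)
  (convex_ball c ρ).isPreconnected.pos_of_pos_of_ne_zero hcont.continuousOn hne
    (mem_ball_self (pos_of_mem_ball hζ)) hc hζ

theorem exists_uniform_surjOn_closedBall_add_conj {h g : ℂ → ℂ} (hh : Differentiable ℂ h)
    (hg : Differentiable ℂ g) {ρ η M M₁ : ℝ} (hρ : 0 < ρ) (hη : 0 < η) (hM₀ : 0 ≤ M)
    (hM : M < 1) (hM₁ : 0 < M₁) :
    ∃ r R : ℝ, 0 < R ∧ ∀ c, η ^ 2 ≤ jacobian h g c →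
      (∀ ζ ∈ ball c ρ, jacobian h g ζ ≠ 0) →
      (∀ ζ ∈ ball c ρ, jacobian h g ζ / jacobian h g c ≤ M₁) →
      (∀ ζ ∈ ball c ρ, ‖dilatation h g ζ‖ ≤ M) →
      SurjOn (fun ζ => h ζ + conj (g ζ)) (closedBall c r) (closedBall (h c + conj (g c)) R) := by
  set C := √(M₁ / (1 - M ^ 2))
  have hC : 0 < C := Real.sqrt_pos.2 (div_pos hM₁ (by nlinarith))
  -- small enough that the linearization error `4 C ‖h' c‖ r / ρ` is at most `(1 - M) ‖h' c‖ / 2`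
  set r := min (ρ / 2) ((1 - M) * ρ / (8 * C))
  have hr : 0 < r := lt_min (by positivity) (div_pos (mul_pos (by linarith) hρ) (by positivity))
  refine ⟨r, (1 - M) * η * r / 2, by nlinarith [mul_pos hη hr], fun c hJc hne hJle hμ => ?_⟩
  have hc : c ∈ ball c ρ := mem_ball_self hρ
  have hJpos : ∀ ζ ∈ ball c ρ, 0 < jacobian h g ζ := fun ζ =>
    jacobian_pos_of_ne_zero hh hg hne ((pow_pos hη 2).trans_le hJc)
  have hdil : ∀ ζ ∈ ball c ρ, ‖deriv g ζ‖ ≤ M * ‖deriv h ζ‖ := fun ζ hζ =>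
    norm_deriv_le_mul_of_norm_dilatation_le (hJpos ζ hζ) (hμ ζ hζ)
  have hAh : ∀ ζ ∈ ball c ρ, ‖deriv h ζ‖ ≤ C * ‖deriv h c‖ := fun ζ hζ =>
    norm_le_sqrt_mul_norm_of_jacobian_div_le hM₀ hM (hdil ζ hζ) (hJpos c hc) (hJle ζ hζ)
  have hAg : ∀ ζ ∈ ball c ρ, ‖deriv g ζ‖ ≤ C * ‖deriv h c‖ := fun ζ hζ =>
    ((hdil ζ hζ).trans (mul_le_of_le_one_left (norm_nonneg _) hM.le)).trans (hAh ζ hζ)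
  have hη_le : η ≤ ‖deriv h c‖ :=
    le_of_pow_le_pow_left₀ two_ne_zero (norm_nonneg _) (by unfold jacobian at hJc; nlinarith)
  have hgh : ‖deriv g c‖ < ‖deriv h c‖ := by nlinarith [hdil c hc]
  refine (surjOn_closedBall_add_conj hh.differentiableOn hg.differentiableOn hAh hAg hr.le
    ((min_le_left _ _).trans_lt (half_lt_self hρ)) hgh).mono Subset.rfl
    (closedBall_subset_closedBall ?_)
  have herr : 4 * (C * ‖deriv h c‖) * r / ρ ≤ (1 - M) * ‖deriv h c‖ / 2 := by
    have : r ≤ (1 - M) * ρ / (8 * C) := min_le_right _ _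
    rw [le_div_iff₀ (by positivity)] at this
    rw [div_le_iff₀ hρ]
    nlinarith [norm_nonneg (deriv h c)]
  have hη_le' : (1 - M) * η ≤ (1 - M) * ‖deriv h c‖ :=
    mul_le_mul_of_nonneg_left hη_le (by linarith)
  calc (1 - M) * η * r / 2 = (1 - M) * η / 2 * r := by ring
    _ ≤ (‖deriv h c‖ - ‖deriv g c‖ - 4 * (C * ‖deriv h c‖) * r / ρ) * r := by
      gcongr
      linarith [hdil c hc]

theorem not_isBounded_preimage_of_forall_surjOn {ι E F : Type*} [NormedAddCommGroup E]
    [PseudoMetricSpace F] {l : Filter ι} [l.NeBot] {f : E → F} {z : ι → E} {w₀ : F} {r R : ℝ}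
    (hz : Tendsto (fun n => ‖z n‖) l atTop) (hfz : Tendsto (fun n => f (z n)) l (𝓝 w₀))
    (hf : ∀ n, SurjOn f (closedBall (z n) r) (closedBall (f (z n)) R)) {w : F}
    (hw : w ∈ ball w₀ R) : ¬IsBounded (f ⁻¹' {w}) := by
  rintro hbdd
  obtain ⟨B, hB⟩ := isBounded_iff_forall_norm_le.1 hbdd
  have hnear : ∀ᶠ n in l, dist (f (z n)) w₀ < R - dist w w₀ :=
    tendsto_nhds.1 hfz _ (sub_pos.2 (mem_ball.1 hw))
  obtain ⟨n, hn, hzn⟩ := (hnear.and (hz.eventually_gt_atTop (B + r))).exists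
  obtain ⟨ζ, hζ, hfζ⟩ :=
    hf n (mem_closedBall.2 (by linarith [dist_triangle_right w (f (z n)) w₀]))
  have hζz : ‖z n‖ ≤ ‖ζ‖ + r := by
    linarith [norm_le_norm_add_norm_sub' (z n) ζ, dist_eq_norm' ζ (z n), mem_closedBall.1 hζ]
  linarith [hB ζ hfζ]

theorem mem_clusterSetInf_of_not_isBounded_preimage {f : ℂ → ℂ} {w : ℂ}
    (hw : ¬IsBounded (f ⁻¹' {w})) : w ∈ clusterSetInf f := by
  simp only [isBounded_iff_forall_norm_le, not_exists, not_forall, not_le] at hw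
  choose ζ hζw hζ using fun n : ℕ => hw n
  refine ⟨ζ, tendsto_atTop_mono (fun n => (hζ n).le) tendsto_natCast_atTop_atTop, ?_⟩
  simp only [show ∀ n, f (ζ n) = w from hζw, tendsto_const_nhds]

theorem cluster_set_nonempty_interior_general (f h g : ℂ → ℂ)
    (hh : Differentiable ℂ h) (hg : Differentiable ℂ g)
    (hf : ∀ z, f z = h z + (starRingEnd ℂ) (g z))
    (J : ℂ → ℝ)
    (hJ : ∀ z, J z = ‖deriv h z‖ ^ 2 - ‖deriv g z‖ ^ 2)
    (S : Set ℂ) (hS : S = {z : ℂ | J z = 0})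
    (z : ℕ → ℂ) (w₀ : ℂ)
    (hzinf : Tendsto (fun n => ‖z n‖) atTop atTop)
    (hw : Tendsto (fun n => f (z n)) atTop (nhds w₀))
    (δ : ℝ) (hdist : ∀ n, ∀ s ∈ S, δ ≤ dist (z n) s)
    (η : ℝ) (hη : 0 < η) (hJinf : ∀ n, η ^ 2 ≤ J (z n))
    (ρ : ℝ) (hρ0 : 0 < ρ) (hρδ : ρ < δ)
    (M₁ : ℝ) (hM₁ : ∀ n, ∀ ζ ∈ Metric.ball (z n) ρ, J ζ / J (z n) ≤ M₁)
    (M : ℝ) (hM : M < 1)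
    (hμ : ∀ n, ∀ ζ ∈ Metric.closedBall (z n) ρ,
      ‖(starRingEnd ℂ) (deriv g ζ) / deriv h ζ‖ ≤ M) :
    (interior (clusterSetInf f)).Nonempty ∧
      ∃ ε > (0 : ℝ), ∀ w ∈ Metric.ball w₀ ε, (f ⁻¹' {w}).Infinite := by
  obtain rfl : f = fun ζ => h ζ + conj (g ζ) := funext hf
  obtain rfl : J = jacobian h g := funext hJ
  subst hS
  have hM₀ : 0 ≤ M := (norm_nonneg _).trans (hμ 0 (z 0) (mem_closedBall_self hρ0.le))
  have hM₁_pos : 0 < M₁ := by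
    have := hM₁ 0 (z 0) (mem_ball_self hρ0)
    rw [div_self ((pow_pos hη 2).trans_le (hJinf 0)).ne'] at this
    linarith
  obtain ⟨r, R, hR, hcover⟩ :=
    exists_uniform_surjOn_closedBall_add_conj hh hg hρ0 hη hM₀ hM hM₁_pos
  have hunbdd : ∀ w ∈ ball w₀ R, ¬IsBounded ((fun ζ => h ζ + conj (g ζ)) ⁻¹' {w}) :=
    fun w => not_isBounded_preimage_of_forall_surjOn hzinf hw fun n =>
      hcover (z n) (hJinf n) (fun ζ hζ hζS => by linarith [hdist n ζ hζS, mem_ball'.1 hζ])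
        (hM₁ n) fun ζ hζ => hμ n ζ (ball_subset_closedBall hζ)
  refine ⟨⟨w₀, mem_interior.2 ⟨ball w₀ R, fun w hw' =>
    mem_clusterSetInf_of_not_isBounded_preimage (hunbdd w hw'), isOpen_ball, mem_ball_self hR⟩⟩,
    R, hR, fun w hw' hfin => hunbdd w hw' hfin.isBounded⟩

/-- Let `f = h + conj g` be harmonic on `ℂ` with Jacobian
`J = |h'|² - |g'|²` and critical set `S = {J = 0}`.  Suppose `zₙ → ∞`,
`f(zₙ) → w₀`, `J(zₙ) > 0`, and: (1) `d({zₙ}, S) = δ > 0`; (2) `infₙ J(zₙ) = η² > 0`;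
(3) there is `ρ ∈ (0,δ)` with `sup_{n, z ∈ B(zₙ,ρ)} J(z)/J(zₙ) < ∞`;
(4) `supₙ {|μ_f(z)| : z ∈ closure B(zₙ,ρ)} < 1`.  Then the cluster set
`C(f,∞)` has non-empty interior and `Val(f,w) = ∞` for all `w` in a
neighborhood of `w₀`. -/
theorem cluster_set_nonempty_interior (f h g : ℂ → ℂ)
    (hh : Differentiable ℂ h) (hg : Differentiable ℂ g)
    (hf : ∀ z, f z = h z + (starRingEnd ℂ) (g z))
    (J : ℂ → ℝ)
    (hJ : ∀ z, J z = ‖deriv h z‖ ^ 2 - ‖deriv g z‖ ^ 2)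
    (S : Set ℂ) (hS : S = {z : ℂ | J z = 0})
    (z : ℕ → ℂ) (w₀ : ℂ)
    (hzinf : Tendsto (fun n => ‖z n‖) atTop atTop)
    (hw : Tendsto (fun n => f (z n)) atTop (nhds w₀))
    (hJpos : ∀ n, 0 < J (z n))
    (δ : ℝ) (hδ : 0 < δ) (hdist : ∀ n, ∀ s ∈ S, δ ≤ dist (z n) s)
    (η : ℝ) (hη : 0 < η) (hJinf : ∀ n, η ^ 2 ≤ J (z n))
    (ρ : ℝ) (hρ0 : 0 < ρ) (hρδ : ρ < δ)
    (M₁ : ℝ) (hM₁ : ∀ n, ∀ ζ ∈ Metric.ball (z n) ρ, J ζ / J (z n) ≤ M₁)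
    (M : ℝ) (hM : M < 1)
    (hμ : ∀ n, ∀ ζ ∈ Metric.closedBall (z n) ρ,
      ‖(starRingEnd ℂ) (deriv g ζ) / deriv h ζ‖ ≤ M) :
    (interior (clusterSetInf f)).Nonempty ∧
      ∃ ε > (0 : ℝ), ∀ w ∈ Metric.ball w₀ ε, (f ⁻¹' {w}).Infinite :=
  cluster_set_nonempty_interior_general f h g hh hg hf J hJ S hS z w₀ hzinf hw δ hdist η hη hJinf ρ
    hρ0 hρδ M₁ hM₁ M hM hμ
end

section
/- Let f : ℝ² → ℝ² be a C¹ map and γ : [0,∞) → ℝ² an injective continuous path with f(γ(t)) → w₀. Suppose that for some closed annulus A = {z : m ≤ |z| ≤ m+1}, every circle C_r = {|z| = r} with m ≤ r ≤ m+1 contains a point ζ_r with f(ζ_r) = w₀. Then there exists ζ ∈ A with f(ζ) = w₀ such that f is not injective on any neighborhood of ζ; consequently J_f(ζ) = 0 and w₀ ∈ f(S). -/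
/-!
The preimages `ζ_r` of `w₀`, one on each circle `‖z‖ = r`, form an infinite subset of the compact
annulus, so they accumulate at some `ζ` in the annulus, and `f ζ = w₀` by continuity. Every
neighbourhood of `ζ` then contains two distinct points of the fibre `f ⁻¹' {w₀}`, so `f` is
injective on no neighbourhood of `ζ`; by the inverse function theorem `J_f(ζ) = 0`.
-/

open Filter

/-- The Jacobian determinant of `f : ℂ → ℂ` viewed as a map `ℝ² → ℝ²`. -/
noncomputable def Jdet (f : ℂ → ℂ) (z : ℂ) : ℝ :=
  LinearMap.det (fderiv ℝ f z : ℂ →ₗ[ℝ] ℂ)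

open Set Topology

theorem exists_accPt_annulus_of_forall_norm_eq {E : Type*} [NormedAddCommGroup E] [ProperSpace E]
    {s : Set E} (hs : IsClosed s) {a b : ℝ} (hab : a < b)
    (hnorm : ∀ r, a ≤ r → r ≤ b → ∃ z ∈ s, ‖z‖ = r) :
    ∃ ζ ∈ s, a ≤ ‖ζ‖ ∧ ‖ζ‖ ≤ b ∧ AccPt ζ (𝓟 s) := by
  set K := s ∩ {z | a ≤ ‖z‖ ∧ ‖z‖ ≤ b}
  have hK_compact : IsCompact K := by
    refine (isCompact_closedBall (0 : E) b).of_isClosed_subset ?_ fun z hz => ?_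
    · exact hs.inter ((isClosed_le continuous_const continuous_norm).inter
        (isClosed_le continuous_norm continuous_const))
    · simpa using hz.2.2
  have hK_infinite : K.Infinite := by
    refine ((Icc_infinite hab).mono fun r hr => ?_).of_image (‖·‖)
    obtain ⟨z, hzs, rfl⟩ := hnorm r hr.1 hr.2
    exact ⟨z, ⟨hzs, hr⟩, rfl⟩
  obtain ⟨ζ, ⟨hζs, hζa, hζb⟩, hacc⟩ :=
    hK_infinite.exists_accPt_of_subset_isCompact hK_compact subset_rfl
  exact ⟨ζ, hζs, hζa, hζb, hacc.mono (principal_mono.2 inter_subset_left)⟩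

theorem not_injOn_of_accPt_fiber {X Y : Type*} [TopologicalSpace X] {f : X → Y} {ζ : X}
    (hacc : AccPt ζ (𝓟 (f ⁻¹' {f ζ}))) : ∀ U ∈ 𝓝 ζ, ¬ InjOn f U := by
  intro U hU hinj
  obtain ⟨z, ⟨hzU, hzζ⟩, hfz⟩ := hacc.nonempty_of_mem <|
    inter_mem_inf (inter_mem (nhdsWithin_le_nhds hU) self_mem_nhdsWithin) (mem_principal_self _)
  exact hzζ (hinj hzU (mem_of_mem_nhds hU) hfz)

theorem HasStrictFDerivAt.exists_mem_nhds_injOn_of_det_ne_zero {𝕜 E : Type*}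
    [NontriviallyNormedField 𝕜] [CompleteSpace 𝕜] [NormedAddCommGroup E] [NormedSpace 𝕜 E]
    [FiniteDimensional 𝕜 E] {f : E → E} {f' : E →L[𝕜] E} {a : E}
    (hf : HasStrictFDerivAt f f' a) (hdet : f'.det ≠ 0) : ∃ U ∈ 𝓝 a, InjOn f U := by
  have := FiniteDimensional.complete 𝕜 E
  have he : HasStrictFDerivAt f (f'.toContinuousLinearEquivOfDetNeZero hdet : E →L[𝕜] E) a := by
    rwa [ContinuousLinearMap.coe_toContinuousLinearEquivOfDetNeZero]
  exact ⟨_, (he.toOpenPartialHomeomorph f).open_source.mem_nhds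
    he.mem_toOpenPartialHomeomorph_source, (he.toOpenPartialHomeomorph f).injOn⟩

theorem Jdet_eq_zero_of_not_injOn {f : ℂ → ℂ} {z : ℂ} (hf : ContDiffAt ℝ 1 f z)
    (hnot : ∀ U ∈ 𝓝 z, ¬ InjOn f U) : Jdet f z = 0 := by
  by_contra hJ
  obtain ⟨U, hU, hinj⟩ :=
    (hf.hasStrictFDerivAt one_ne_zero).exists_mem_nhds_injOn_of_det_ne_zero hJ
  exact hnot U hU hinj

theorem annulus_accumulation_critical_general (f : ℂ → ℂ) (hf : ContDiff ℝ 1 f)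
    (w₀ : ℂ)
    (m : ℝ)
    (hann : ∀ r : ℝ, m ≤ r → r ≤ m + 1 → ∃ ζ : ℂ, ‖ζ‖ = r ∧ f ζ = w₀) :
    ∃ ζ : ℂ, m ≤ ‖ζ‖ ∧ ‖ζ‖ ≤ m + 1 ∧ f ζ = w₀ ∧
      (∀ U ∈ nhds ζ, ¬ Set.InjOn f U) ∧ Jdet f ζ = 0 ∧
      w₀ ∈ f '' {z : ℂ | Jdet f z = 0} := by
  obtain ⟨ζ, (hfζ : f ζ = w₀), hζm, hζm', hacc⟩ :=
    exists_accPt_annulus_of_forall_norm_eq (isClosed_singleton.preimage hf.continuous)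
      (lt_add_one m) fun r hm hr => (hann r hm hr).imp fun z ⟨hz, hfz⟩ => ⟨hfz, hz⟩
  have hnot : ∀ U ∈ 𝓝 ζ, ¬ InjOn f U := not_injOn_of_accPt_fiber (hfζ ▸ hacc)
  have hJ : Jdet f ζ = 0 := Jdet_eq_zero_of_not_injOn hf.contDiffAt hnot
  exact ⟨ζ, hζm, hζm', hfζ, hnot, hJ, ζ, hJ, hfζ⟩

/-- Let `f` be `C¹`, `γ` an injective continuous path with
`f(γ(t)) → w₀`, and suppose every circle `|z| = r` with `m ≤ r ≤ m+1` contains a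
preimage `ζ_r` of `w₀`.  Then some `ζ` in the annulus `m ≤ |ζ| ≤ m+1` satisfies
`f(ζ) = w₀`, `f` is injective on no neighborhood of `ζ`, `J_f(ζ) = 0`, and
`w₀ ∈ f(S)` where `S` is the critical set. -/
theorem annulus_accumulation_critical (f : ℂ → ℂ) (hf : ContDiff ℝ 1 f)
    (γ : ℝ → ℂ) (hγc : ContinuousOn γ (Set.Ici 0))
    (hγi : Set.InjOn γ (Set.Ici 0)) (w₀ : ℂ)
    (hlim : Tendsto (fun t => f (γ t)) atTop (nhds w₀))
    (m : ℝ)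
    (hann : ∀ r : ℝ, m ≤ r → r ≤ m + 1 → ∃ ζ : ℂ, ‖ζ‖ = r ∧ f ζ = w₀) :
    ∃ ζ : ℂ, m ≤ ‖ζ‖ ∧ ‖ζ‖ ≤ m + 1 ∧ f ζ = w₀ ∧
      (∀ U ∈ nhds ζ, ¬ Set.InjOn f U) ∧ Jdet f ζ = 0 ∧
      w₀ ∈ f '' {z : ℂ | Jdet f z = 0} :=
  annulus_accumulation_critical_general f hf w₀ m hann
end

section
/- For f(z) = e^x cos y + i·xy (z = x + iy), the cluster set at infinity equals the vertical strip {w : −1 ≤ Re w ≤ 1}: every w with |Re w| ≤ 1 is a limit of f(zₙ) with zₙ → ∞, and no w with |Re w| > 1 is such a limit. -/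
/-!
If `f (zₙ) → w` with `|Re w| > 1`, then eventually `eˣ > 1`, so `x` is bounded below by a positive
constant; since `xy` stays bounded, `y` is bounded, hence `x → ∞` and `y = xy / x → 0`, which forces
`eˣ cos y → ∞`. Conversely, for `|a| ≤ 1` take `yₙ → ∞` with `cos yₙ = a` and `zₙ = b / yₙ + i yₙ`:
then `xₙ yₙ = b` and `e^{xₙ} cos yₙ = e^{b / yₙ} a → a`.
-/

open Filter

open Topology Real

section Sequences

variable {ι : Type*} {l : Filter ι} {z : ι → ℂ}

lemma tendsto_re_atTop_of_abs_im_le {C : ℝ} (hz : Tendsto (fun n => ‖z n‖) l atTop)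
    (hre : ∀ᶠ n in l, 0 ≤ (z n).re) (him : ∀ᶠ n in l, |(z n).im| ≤ C) :
    Tendsto (fun n => (z n).re) l atTop := by
  refine tendsto_atTop_mono' l ?_ (tendsto_atTop_add_const_right l (-C) hz)
  filter_upwards [hre, him] with n hn_re hn_im
  have := Complex.norm_le_abs_re_add_abs_im (z n)
  rw [abs_of_nonneg hn_re] at this
  linarith

lemma abs_le_one_of_tendsto_exp_mul_cos [l.NeBot] {a b : ℝ}
    (hz : Tendsto (fun n => ‖z n‖) l atTop)
    (hre : Tendsto (fun n => exp (z n).re * cos (z n).im) l (𝓝 a))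
    (him : Tendsto (fun n => (z n).re * (z n).im) l (𝓝 b)) : |a| ≤ 1 := by
  by_contra! ha
  obtain ⟨c, hc, hca⟩ := exists_between ha
  have hlog_c : 0 < log c := log_pos hc
  have hx : ∀ᶠ n in l, log c < (z n).re := by
    filter_upwards [hre.abs.eventually_const_lt hca] with n hn
    rw [log_lt_iff_lt_exp (by linarith)]
    calc c < |exp (z n).re * cos (z n).im| := hn
      _ = exp (z n).re * |cos (z n).im| := by rw [abs_mul, abs_of_pos (exp_pos _)]
      _ ≤ exp (z n).re := mul_le_of_le_one_right (exp_pos _).le (abs_cos_le_one _)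
  have hy : ∀ᶠ n in l, |(z n).im| ≤ (|b| + 1) / log c := by
    filter_upwards [hx, him.abs.eventually_lt_const (lt_add_one |b|)] with n hn_x hn_xy
    rw [le_div_iff₀ hlog_c]
    calc |(z n).im| * log c ≤ |(z n).im| * (z n).re :=
          mul_le_mul_of_nonneg_left hn_x.le (abs_nonneg _)
      _ = |(z n).re * (z n).im| := by rw [abs_mul, abs_of_pos (hlog_c.trans hn_x), mul_comm]
      _ ≤ |b| + 1 := hn_xy.le
  have hx_top : Tendsto (fun n => (z n).re) l atTop :=
    tendsto_re_atTop_of_abs_im_le hz (hx.mono fun n hn => (hlog_c.trans hn).le) hy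
  have hy_zero : Tendsto (fun n => (z n).im) l (𝓝 0) := by
    refine (him.div_atTop hx_top).congr' ?_
    filter_upwards [hx] with n hn
    exact mul_div_cancel_left₀ _ (hlog_c.trans hn).ne'
  have hcos : Tendsto (fun n => cos (z n).im) l (𝓝 1) := by
    simpa [Function.comp_def] using (continuous_cos.tendsto 0).comp hy_zero
  exact not_tendsto_nhds_of_tendsto_atTop
    ((tendsto_exp_atTop.comp hx_top).atTop_mul_pos one_pos hcos) a hre

end Sequences

lemma exists_tendsto_atTop_forall_cos_eq {a : ℝ} (h₁ : -1 ≤ a) (h₂ : a ≤ 1) :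
    ∃ y : ℕ → ℝ, Tendsto y atTop atTop ∧ ∀ n, cos (y n) = a :=
  ⟨fun n => arccos a + n * (2 * π),
    tendsto_atTop_add_const_left _ _
      (tendsto_natCast_atTop_atTop.atTop_mul_const (by positivity)),
    fun n => by rw [cos_add_nat_mul_two_pi, cos_arccos h₁ h₂]⟩

section ExpCosAddIMul

variable {f : ℂ → ℂ} (hf : ∀ z : ℂ, f z = (Real.exp z.re * Real.cos z.im : ℝ) +
  Complex.I * ((z.re * z.im : ℝ) : ℂ))
include hf

lemma abs_re_le_one_of_mem_clusterSetInf {w : ℂ} (hw : w ∈ clusterSetInf f) : |w.re| ≤ 1 := by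
  obtain ⟨z, hz, hlim⟩ := hw
  refine abs_le_one_of_tendsto_exp_mul_cos hz (b := w.im) ?_ ?_
  · simpa only [Function.comp_def, hf, Complex.add_re, Complex.ofReal_re, Complex.I_mul_re,
      Complex.ofReal_im, neg_zero, add_zero] using (Complex.continuous_re.tendsto w).comp hlim
  · simpa only [Function.comp_def, hf, Complex.add_im, Complex.ofReal_re, Complex.I_mul_im,
      Complex.ofReal_im, zero_add] using (Complex.continuous_im.tendsto w).comp hlim

lemma mem_clusterSetInf_of_abs_re_le_one {w : ℂ} (hw : |w.re| ≤ 1) : w ∈ clusterSetInf f := by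
  obtain ⟨y, hy, hcos⟩ := exists_tendsto_atTop_forall_cos_eq (abs_le.mp hw).1 (abs_le.mp hw).2
  refine ⟨fun n => (w.im / y n : ℝ) + (y n : ℝ) * Complex.I, ?_, ?_⟩
  · refine tendsto_atTop_mono (fun n => ?_) (tendsto_abs_atTop_atTop.comp hy)
    simpa using Complex.abs_im_le_norm ((w.im / y n : ℝ) + (y n : ℝ) * Complex.I)
  · have h_re : Tendsto (fun n => exp (w.im / y n) * cos (y n)) atTop (𝓝 w.re) := by
      simpa [hcos] using ((continuous_exp.tendsto 0).comp
        (tendsto_const_nhds.div_atTop hy)).mul_const w.re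
    have h_im : Tendsto (fun n => w.im / y n * y n) atTop (𝓝 w.im) := by
      refine tendsto_const_nhds.congr' ?_
      filter_upwards [hy.eventually_ne_atTop 0] with n hn
      exact (div_mul_cancel₀ _ hn).symm
    have := ((Complex.continuous_ofReal.tendsto _).comp h_re).add
      (((Complex.continuous_ofReal.tendsto _).comp h_im).const_mul Complex.I)
    simpa [hf, Function.comp_def, mul_comm Complex.I, Complex.re_add_im] using this

end ExpCosAddIMul

/-- For `f(z) = e^x cos y + i x y` (with `z = x + iy`), the
cluster set at infinity is exactly the vertical strip `{-1 ≤ Re w ≤ 1}`. -/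
theorem cluster_set_is_strip (f : ℂ → ℂ)
    (hf : ∀ z : ℂ, f z = (Real.exp z.re * Real.cos z.im : ℝ) +
      Complex.I * ((z.re * z.im : ℝ) : ℂ)) :
    clusterSetInf f = {w : ℂ | -1 ≤ w.re ∧ w.re ≤ 1} := by
  ext w
  rw [Set.mem_ofPred_eq, ← abs_le]
  exact ⟨abs_re_le_one_of_mem_clusterSetInf hf, mem_clusterSetInf_of_abs_re_le_one hf⟩
end

section
/- For f(z) = e^z + i·Im z and z_k = log((4k+3)π/2) + i(4k+3)π/2 (k ∈ ℤ⁺), on each closed ball B_k = closure of B(z_k, log(2)/2) the dilatation satisfies |μ_f(z)| = 1/|2e^z + 1| < 1/2, and J_f(z)/J_f(z_k) < 2 + 2√2/(3π). -/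
/-!
Write `f = g + i·Im` with `g = exp`. Then `f_z = e^z + 1/2` and `f_z̄ = 1/2`, so
`μ_f = 1/(2e^z + 1)` and `J_f = |f_z|² - |f_z̄|² = |e^z|² + Re e^z`.
Put `c = (4k+3)π/2`. On `B_k` the modulus `e^{Re z}` lies between `c/√2` and `√2 c`; the lower
bound exceeds `3/2`, which gives `|μ_f| < 1/2`. Since `cos c = 0`, `e^{z_k} = -ic` and
`J_f(z_k) = c²`, while `J_f(z) ≤ e^{2 Re z} + e^{Re z} ≤ 2c² + √2 c`, and `√2 c < (2√2/(3π)) c²`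
because `c > 3π/2` once `k ≥ 1`.
-/

open Real

theorem LinearMap.det_smul_one_add_I_smul_im (a : ℂ) :
    LinearMap.det ((a • (1 : ℂ →L[ℝ] ℂ) +
      Complex.I • Complex.ofRealCLM.comp Complex.imCLM : ℂ →L[ℝ] ℂ) : ℂ →ₗ[ℝ] ℂ) =
      ‖a‖ ^ 2 + a.re := by
  rw [← LinearMap.det_toMatrix Complex.basisOneI, Matrix.det_fin_two, Complex.sq_norm,
    Complex.normSq_apply]
  simp [LinearMap.toMatrix_apply]
  ring

theorem Jdet_add_I_mul_im {g : ℂ → ℂ} {g' z : ℂ} (hg : HasDerivAt g g' z) :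
    Jdet (fun w => g w + Complex.I * (w.im : ℂ)) z = ‖g'‖ ^ 2 + g'.re := by
  have hG : HasFDerivAt (fun w : ℂ => Complex.I * (w.im : ℂ))
      (Complex.I • Complex.ofRealCLM.comp Complex.imCLM : ℂ →L[ℝ] ℂ) z :=
    (Complex.I • Complex.ofRealCLM.comp Complex.imCLM : ℂ →L[ℝ] ℂ).hasFDerivAt
  rw [Jdet, (hg.complexToReal_fderiv.fun_add hG).fderiv, LinearMap.det_smul_one_add_I_smul_im]

theorem Jdet_exp_add_I_mul_im (z : ℂ) :
    Jdet (fun w => Complex.exp w + Complex.I * (w.im : ℂ)) z =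
      Real.exp z.re ^ 2 + Real.exp z.re * Real.cos z.im := by
  rw [Jdet_add_I_mul_im (Complex.hasDerivAt_exp z), Complex.norm_exp, Complex.exp_re]

theorem norm_half_div_add_half (w : ℂ) : ‖((1 : ℂ) / 2) / (w + 1 / 2)‖ = 1 / ‖2 * w + 1‖ := by
  rw [show w + 1 / 2 = (2 * w + 1) / 2 by ring, div_div_div_cancel_right₀ two_ne_zero]
  simp

theorem one_div_norm_two_mul_add_one_lt_half {w : ℂ} (hw : 3 / 2 < ‖w‖) :
    1 / ‖2 * w + 1‖ < 1 / 2 := by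
  have h : 2 * ‖w‖ - 1 ≤ ‖2 * w + 1‖ := by
    simpa [norm_mul] using norm_sub_le (2 * w + 1) 1
  exact one_div_lt_one_div_of_lt two_pos (by linarith)

theorem exp_re_mem_Icc_of_mem_closedBall {z w : ℂ} {r : ℝ} (hz : z ∈ Metric.closedBall w r) :
    Real.exp z.re ∈ Set.Icc (Real.exp (w.re - r)) (Real.exp (w.re + r)) := by
  have h : |z.re - w.re| ≤ r :=
    (Complex.abs_re_le_norm (z - w)).trans (Complex.dist_eq z w ▸ Metric.mem_closedBall.mp hz)
  obtain ⟨h₁, h₂⟩ := abs_le.mp h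
  exact ⟨Real.exp_le_exp.2 (by linarith), Real.exp_le_exp.2 (by linarith)⟩

theorem exp_log_add_log_two_div_two {c : ℝ} (hc : 0 < c) :
    Real.exp (Real.log c + Real.log 2 / 2) = √2 * c := by
  rw [Real.exp_add, Real.exp_log hc, ← Real.log_sqrt zero_le_two,
    Real.exp_log (Real.sqrt_pos.2 two_pos), mul_comm]

theorem exp_log_sub_log_two_div_two {c : ℝ} (hc : 0 < c) :
    Real.exp (Real.log c - Real.log 2 / 2) = c / √2 := by
  rw [Real.exp_sub, Real.exp_log hc, ← Real.log_sqrt zero_le_two,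
    Real.exp_log (Real.sqrt_pos.2 two_pos)]

theorem Real.cos_four_mul_add_three_mul_pi_div_two (k : ℕ) :
    Real.cos ((4 * k + 3) * π / 2) = 0 :=
  Real.cos_eq_zero_iff.2 ⟨2 * k + 1, by push_cast; ring⟩

theorem sq_add_div_sq_lt {t c : ℝ} (ht₀ : 0 ≤ t) (ht : t ≤ √2 * c) (hc : 3 * π / 2 < c) :
    (t ^ 2 + t) / c ^ 2 < 2 + 2 * √2 / (3 * π) := by
  have hc₀ : 0 < c := by linarith [Real.pi_pos]
  have hlin : √2 * c < 2 * √2 / (3 * π) * c ^ 2 := by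
    rw [div_mul_eq_mul_div, lt_div_iff₀ (by positivity)]
    nlinarith [mul_lt_mul_of_pos_left (show 3 * π < 2 * c by linarith)
      (mul_pos (Real.sqrt_pos.2 two_pos) hc₀)]
  have hsq : t ^ 2 ≤ 2 * c ^ 2 := by
    nlinarith [Real.sq_sqrt zero_le_two, mul_le_mul ht ht ht₀ (by positivity)]
  rw [div_lt_iff₀ (by positivity)]
  linarith

/-- For `f(z) = e^z + i Im z` and
`z_k = log((4k+3)π/2) + i (4k+3)π/2` (`k ∈ ℤ⁺`), on the closed ball
`B_k = closedBall z_k (log 2 / 2)` the dilatation `μ_f(z) = (1/2)/(e^z + 1/2)`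
satisfies `|μ_f(z)| = 1/|2e^z + 1| < 1/2`, and
`J_f(z)/J_f(z_k) < 2 + 2√2/(3π)`. -/
theorem dilatation_and_jacobian_bounds (f : ℂ → ℂ)
    (hf : ∀ z : ℂ, f z = Complex.exp z + Complex.I * ((z.im : ℝ) : ℂ)) :
    ∀ k : ℕ, 0 < k →
      ∀ zk : ℂ, zk = ((Real.log ((4 * (k : ℝ) + 3) * π / 2) : ℝ) : ℂ) +
          Complex.I * (((4 * (k : ℝ) + 3) * π / 2 : ℝ) : ℂ) →
        ∀ z ∈ Metric.closedBall zk (Real.log 2 / 2),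
          ‖((1 : ℂ) / 2) / (Complex.exp z + 1 / 2)‖ =
            1 / ‖2 * Complex.exp z + 1‖ ∧
          1 / ‖2 * Complex.exp z + 1‖ < 1 / 2 ∧
          Jdet f z / Jdet f zk < 2 + 2 * Real.sqrt 2 / (3 * π) := by
  intro k hk zk hzk z hz
  set c : ℝ := (4 * (k : ℝ) + 3) * π / 2 with hc
  have hk₁ : (1 : ℝ) ≤ k := Nat.one_le_cast.2 hk
  have hc_gt : 3 * π / 2 < c := by nlinarith [Real.pi_pos]
  have hc₀ : 0 < c := by linarith [Real.pi_pos]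
  have hJ (w : ℂ) : Jdet f w = Real.exp w.re ^ 2 + Real.exp w.re * Real.cos w.im := by
    rw [show f = _ from funext hf, Jdet_exp_add_I_mul_im]
  have hzk_re : zk.re = Real.log c := by simp [hzk]
  have hzk_im : zk.im = c := by simp [hzk]
  obtain ⟨hlo, hhi⟩ := exp_re_mem_Icc_of_mem_closedBall hz
  rw [hzk_re, exp_log_sub_log_two_div_two hc₀] at hlo
  rw [hzk_re, exp_log_add_log_two_div_two hc₀] at hhi
  refine ⟨norm_half_div_add_half _, one_div_norm_two_mul_add_one_lt_half ?_, ?_⟩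
  · rw [Complex.norm_exp]
    refine lt_of_lt_of_le ?_ hlo
    rw [lt_div_iff₀ (Real.sqrt_pos.2 two_pos)]
    have hsqrt : √2 < 2 := by rw [Real.sqrt_lt' two_pos]; norm_num
    nlinarith [Real.pi_gt_three]
  · have hJ_zk : Jdet f zk = c ^ 2 := by
      rw [hJ, hzk_re, hzk_im, Real.exp_log hc₀,
        Real.cos_four_mul_add_three_mul_pi_div_two, mul_zero, add_zero]
    have hJ_z : Jdet f z ≤ Real.exp z.re ^ 2 + Real.exp z.re := by
      rw [hJ]
      nlinarith [Real.cos_le_one z.im, Real.exp_pos z.re]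
    rw [hJ_zk]
    exact (div_le_div_of_nonneg_right hJ_z (sq_nonneg c)).trans_lt
      (sq_add_div_sq_lt (Real.exp_pos _).le hhi hc_gt)
end
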